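/- arXiv:1201.2300 — 5 statements merged into one kernel-verified Lean document; each statement's English description precedes it below -/
import Mathlib

section
/- If a Banach space X is uacs (uniformly alternatively convex or smooth), then X is uniformly non-square, i.e., there exists δ > 0 such that for all x, y in the closed unit ball of X, either ‖x+y‖ ≤ 2(1−δ) or ‖x−y‖ ≤ 2(1−δ). -/
open Filter Topology

/-- A real Banach space is uacs if for all sequences (xₙ), (yₙ) in the unit sphere and
(xₙ*) in the dual unit sphere, ‖xₙ+yₙ‖ → 2 and xₙ*(xₙ) → 1 imply xₙ*(yₙ) → 1. -/
def IsUacs (X : Type*) [NormedAddCommGroup X] [NormedSpace ℝ X] : Prop :=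
  ∀ (x y : ℕ → X) (f : ℕ → StrongDual ℝ X),
    (∀ n, ‖x n‖ = 1) → (∀ n, ‖y n‖ = 1) → (∀ n, ‖f n‖ = 1) →
    Tendsto (fun n => ‖x n + y n‖) atTop (𝓝 2) →
    Tendsto (fun n => f n (x n)) atTop (𝓝 1) →
    Tendsto (fun n => f n (y n)) atTop (𝓝 1)

theorem uacs_uniformly_nonSquare (X : Type*) [NormedAddCommGroup X] [NormedSpace ℝ X]
    [CompleteSpace X] (h : IsUacs X) :
    ∃ δ > (0 : ℝ), ∀ x y : X, ‖x‖ ≤ 1 → ‖y‖ ≤ 1 →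
      ‖x + y‖ ≤ 2 * (1 - δ) ∨ ‖x - y‖ ≤ 2 * (1 - δ) := by
  by_contra hc
  push_neg at hc
  have hδpos : ∀ n : ℕ, (0:ℝ) < 1/((n:ℝ)+4) := fun n => by positivity
  choose x y hx hy hs hd using fun n : ℕ => hc (1/((n:ℝ)+4)) (hδpos n)
  set δ : ℕ → ℝ := fun n => 1/((n:ℝ)+4) with hδdef
  have hδle : ∀ n, δ n ≤ 1/4 := fun n => by
    simp only [hδdef]
    rw [div_le_div_iff₀ (by positivity) (by norm_num)]
    have : (0:ℝ) ≤ (n:ℝ) := Nat.cast_nonneg n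
    linarith
  have hxlb : ∀ n, 1 - 2*δ n ≤ ‖x n‖ := fun n => by
    have h1 := norm_add_le (x n) (y n)
    have h2 := hs n; have h3 := hy n; linarith
  have hylb : ∀ n, 1 - 2*δ n ≤ ‖y n‖ := fun n => by
    have h1 := norm_add_le (x n) (y n)
    have h2 := hs n; have h3 := hx n; linarith
  have hxpos : ∀ n, (0:ℝ) < ‖x n‖ := fun n => by
    have := hxlb n; have := hδle n; linarith
  have hypos : ∀ n, (0:ℝ) < ‖y n‖ := fun n => by
    have := hylb n; have := hδle n; linarith
  set u : ℕ → X := fun n => ‖x n‖⁻¹ • x n with hudef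
  set v : ℕ → X := fun n => ‖y n‖⁻¹ • y n with hvdef
  have hu1 : ∀ n, ‖u n‖ = 1 := fun n => norm_smul_inv_norm (norm_pos_iff.mp (hxpos n))
  have hv1 : ∀ n, ‖v n‖ = 1 := fun n => norm_smul_inv_norm (norm_pos_iff.mp (hypos n))
  have hux : ∀ n, ‖u n - x n‖ ≤ 2 * δ n := fun n => by
    have h0 := hxpos n
    have heq : u n - x n = (‖x n‖⁻¹ - 1) • x n := by
      simp [hudef, sub_smul]
    rw [heq, norm_smul, Real.norm_eq_abs]
    calc |‖x n‖⁻¹ - 1| * ‖x n‖ = |(‖x n‖⁻¹ - 1) * ‖x n‖| := by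
          rw [abs_mul, abs_of_pos h0]
      _ = |1 - ‖x n‖| := by rw [sub_mul, inv_mul_cancel₀ (ne_of_gt h0), one_mul]
      _ = 1 - ‖x n‖ := abs_of_nonneg (by linarith [hx n])
      _ ≤ 2 * δ n := by linarith [hxlb n]
  have hvy : ∀ n, ‖v n - y n‖ ≤ 2 * δ n := fun n => by
    have h0 := hypos n
    have heq : v n - y n = (‖y n‖⁻¹ - 1) • y n := by
      simp [hvdef, sub_smul]
    rw [heq, norm_smul, Real.norm_eq_abs]
    calc |‖y n‖⁻¹ - 1| * ‖y n‖ = |(‖y n‖⁻¹ - 1) * ‖y n‖| := by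
          rw [abs_mul, abs_of_pos h0]
      _ = |1 - ‖y n‖| := by rw [sub_mul, inv_mul_cancel₀ (ne_of_gt h0), one_mul]
      _ = 1 - ‖y n‖ := abs_of_nonneg (by linarith [hy n])
      _ ≤ 2 * δ n := by linarith [hylb n]
  have hδ0 : Tendsto δ atTop (𝓝 0) := by
    have h4 : Tendsto (fun n : ℕ => ((n:ℝ)+4)) atTop atTop :=
      tendsto_atTop_add_const_right _ 4 tendsto_natCast_atTop_atTop
    simpa [hδdef, one_div, Pi.inv_def] using h4.inv_tendsto_atTop
  have hadd_lb : ∀ n, 2 - 6 * δ n ≤ ‖u n + v n‖ := fun n => by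
    have heq : x n + y n = (u n + v n) - (u n - x n) - (v n - y n) := by abel
    have h1 : ‖x n + y n‖ ≤ ‖u n + v n‖ + ‖u n - x n‖ + ‖v n - y n‖ := by
      rw [heq]
      calc ‖(u n + v n) - (u n - x n) - (v n - y n)‖
          ≤ ‖(u n + v n) - (u n - x n)‖ + ‖v n - y n‖ := norm_sub_le _ _
        _ ≤ ‖u n + v n‖ + ‖u n - x n‖ + ‖v n - y n‖ := by
            linarith [norm_sub_le (u n + v n) (u n - x n)]
    have h2 := hs n
    have h3 := hux n
    have h4 := hvy n
    linarith
  have hsub_lb : ∀ n, 2 - 6 * δ n ≤ ‖u n - v n‖ := fun n => by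
    have heq : x n - y n = (u n - v n) - (u n - x n) + (v n - y n) := by abel
    have h1 : ‖x n - y n‖ ≤ ‖u n - v n‖ + ‖u n - x n‖ + ‖v n - y n‖ := by
      rw [heq]
      calc ‖(u n - v n) - (u n - x n) + (v n - y n)‖
          ≤ ‖(u n - v n) - (u n - x n)‖ + ‖v n - y n‖ := norm_add_le _ _
        _ ≤ ‖u n - v n‖ + ‖u n - x n‖ + ‖v n - y n‖ := by
            linarith [norm_sub_le (u n - v n) (u n - x n)]
    have h2 := hd n
    have h3 := hux n
    have h4 := hvy n
    linarith
  have huv_add : Tendsto (fun n => ‖u n + v n‖) atTop (𝓝 2) := by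
    refine tendsto_of_tendsto_of_tendsto_of_le_of_le
      (show Tendsto (fun n => 2 - 6 * δ n) atTop (𝓝 2) by
        simpa [hδdef] using (hδ0.const_mul 6).const_sub 2)
      tendsto_const_nhds hadd_lb ?_
    intro n
    calc ‖u n + v n‖ ≤ ‖u n‖ + ‖v n‖ := norm_add_le _ _
      _ = 2 := by rw [hu1 n, hv1 n]; norm_num
  have hne : ∀ n, u n - v n ≠ 0 := fun n => by
    have h1 := hsub_lb n
    have h2 := hδle n
    intro hz
    rw [hz, norm_zero] at h1
    linarith
  choose f hf1 hf2 using fun n => exists_dual_vector ℝ (u n - v n) (norm_ne_zero_iff.mpr (hne n))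
  have hf2' : ∀ n, f n (u n) - f n (v n) = ‖u n - v n‖ := fun n => by
    rw [← map_sub]
    exact_mod_cast hf2 n
  have hbound : ∀ n (z : X), |f n z| ≤ ‖z‖ := fun n z => by
    have h1 := (f n).le_opNorm z
    rw [hf1 n, one_mul] at h1
    simpa [Real.norm_eq_abs] using h1
  have hfu : Tendsto (fun n => f n (u n)) atTop (𝓝 1) := by
    refine tendsto_of_tendsto_of_tendsto_of_le_of_le
      (show Tendsto (fun n => 1 - 6 * δ n) atTop (𝓝 1) by
        simpa [hδdef] using (hδ0.const_mul 6).const_sub 1)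
      tendsto_const_nhds ?_ ?_
    · intro n
      have h1 := hsub_lb n
      have h2 := hf2' n
      have h3 := abs_le.mp ((hbound n (v n)).trans_eq (hv1 n))
      dsimp only
      linarith [h3.1, h3.2]
    · intro n
      have h3 := abs_le.mp ((hbound n (u n)).trans_eq (hu1 n))
      dsimp only
      linarith [h3.1, h3.2]
  have hfv : Tendsto (fun n => f n (v n)) atTop (𝓝 1) :=
    h u v f hu1 hv1 hf1 huv_add hfu
  have hev : ∀ᶠ n in atTop, (1:ℝ)/2 < f n (v n) :=
    hfv.eventually (eventually_gt_nhds (by norm_num))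
  obtain ⟨n, hn⟩ := hev.exists
  have hle : f n (v n) ≤ 1/2 := by
    have h1 := abs_le.mp ((hbound n (u n)).trans_eq (hu1 n))
    have h2 := hf2' n
    have h3 := hsub_lb n
    have h4 := hδle n
    linarith [h1.1, h1.2]
  linarith
end

section
/- A Banach space X is uacs if and only if for any two sequences (xₙ), (yₙ) in S_X and every sequence (xₙ*) in S_{X*}, the conditions ‖xₙ+yₙ‖ → 2 and xₙ*(xₙ) = 1 for all n imply xₙ*(yₙ) → 1. -/
open Filter Topology

section BPBAux

variable {X : Type*} [NormedAddCommGroup X] [NormedSpace ℝ X] [CompleteSpace X]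

theorem bpb_max (f : StrongDual ℝ X) {ε : ℝ} (hε : 0 < ε) {x : X} (hx : ‖x‖ ≤ 1) :
    ∃ z : X, ‖z‖ ≤ 1 ∧ ε * ‖z - x‖ ≤ f z - f x ∧
      ∀ w, ‖w‖ ≤ 1 → ε * ‖w - z‖ ≤ f w - f z → w = z := by
  have hmem : ∀ (u v : X), ε * ‖u - v‖ ≤ f u - f v → ε * ‖v - x‖ ≤ f v - f x →
      ε * ‖u - x‖ ≤ f u - f x := by
    intro u v h1 h2
    have h3 : ε * ‖u - x‖ ≤ ε * ‖u - v‖ + ε * ‖v - x‖ := by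
      rw [← mul_add]
      exact mul_le_mul_of_nonneg_left (norm_sub_le_norm_sub_add_norm_sub _ _ _) hε.le
    linarith
  set S := {z : X // ‖z‖ ≤ 1 ∧ ε * ‖z - x‖ ≤ f z - f x} with hS
  let r : S → S → Prop := fun a b => ε * ‖(b : X) - a‖ ≤ f b - f a
  have hrefl : ∀ a : S, r a a := by intro a; simp [r]
  have htrans : ∀ {a b c : S}, r a b → r b c → r a c := by
    rintro a b c h1 h2
    have h1' : ε * ‖(b : X) - a‖ ≤ f b - f a := h1
    have h2' : ε * ‖(c : X) - b‖ ≤ f c - f b := h2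
    have h3 : ε * ‖(c : X) - a‖ ≤ ε * ‖(c : X) - b‖ + ε * ‖(b : X) - a‖ := by
      rw [← mul_add]
      exact mul_le_mul_of_nonneg_left (norm_sub_le_norm_sub_add_norm_sub _ _ _) hε.le
    show ε * ‖(c : X) - a‖ ≤ f c - f a
    linarith
  have hantisym : ∀ {a b : S}, r a b → r b a → a = b := by
    rintro a b h1 h2
    have h1' : ε * ‖(b : X) - a‖ ≤ f b - f a := h1
    have h2' : ε * ‖(a : X) - b‖ ≤ f a - f b := h2
    rw [norm_sub_rev] at h2'
    have hn : ‖(b : X) - a‖ = 0 := by nlinarith [norm_nonneg ((b : X) - a)]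
    exact Subtype.ext (sub_eq_zero.mp (norm_eq_zero.mp hn)).symm
  have hfb : ∀ a : S, f a ≤ ‖f‖ := by
    intro a
    have h := f.le_opNorm (a : X)
    have h2 : |f (a : X)| ≤ ‖f‖ * ‖(a : X)‖ := by simpa [Real.norm_eq_abs] using h
    nlinarith [le_abs_self (f (a : X)), a.2.1, norm_nonneg f]
  haveI : IsRefl S r := ⟨hrefl⟩
  have hxmem : ε * ‖x - x‖ ≤ f x - f x := by simp
  obtain ⟨m, hm⟩ : ∃ m : S, ∀ a, r m a → r a m := by
    apply exists_maximal_of_chains_bounded (r := r) _ (fun {a b c} => htrans)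
    intro c hc
    rcases Set.eq_empty_or_nonempty c with rfl | hne
    · exact ⟨⟨x, hx, hxmem⟩, by simp⟩
    have hbdd : BddAbove ((fun a : S => f a) '' c) := ⟨‖f‖, by rintro _ ⟨a, _, rfl⟩; exact hfb a⟩
    set s := sSup ((fun a : S => f a) '' c) with hs
    have hle : ∀ a ∈ c, f a ≤ s := fun a ha => le_csSup hbdd ⟨a, ha, rfl⟩
    have hseq : ∀ n : ℕ, ∃ a ∈ c, s - 1 / (n + 1) < f a := by
      intro n
      obtain ⟨_, ⟨a, ha, rfl⟩, hlt⟩ := exists_lt_of_lt_csSup (hne.image _)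
        (show s - 1 / (n + 1 : ℝ) < s by
          have : (0:ℝ) < 1 / (n + 1) := by positivity
          linarith)
      exact ⟨a, ha, hlt⟩
    choose z hzc hzlt using hseq
    have hcomp : ∀ m n : ℕ, ε * ‖(z m : X) - z n‖ ≤ |f (z m) - f (z n)| := by
      intro m n
      rcases eq_or_ne (z m) (z n) with h | h
      · simp [h]
      rcases hc.total (hzc m) (hzc n) with h1 | h1
      · calc ε * ‖(z m : X) - z n‖ = ε * ‖(z n : X) - z m‖ := by rw [norm_sub_rev]
          _ ≤ f (z n) - f (z m) := h1
          _ ≤ |f (z m) - f (z n)| := by rw [abs_sub_comm]; exact le_abs_self _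
      · exact h1.trans (le_abs_self _)
    have hdist : ∀ m n N : ℕ, N ≤ m → N ≤ n →
        dist (z m : X) (z n : X) ≤ ε⁻¹ * (1 / (N + 1)) := by
      intro m n N hm hn
      have h1 : |f (z m) - f (z n)| ≤ 1 / (N + 1) := by
        have l1 : s - 1 / (N + 1) < f (z m) := lt_of_le_of_lt (by
          have hc1 := (Nat.cast_le (α := ℝ)).mpr hm
          have : (1:ℝ) / (m+1) ≤ 1 / (N+1) := by
            apply one_div_le_one_div_of_le (by positivity); linarith
          linarith) (hzlt m)
        have l2 : s - 1 / (N + 1) < f (z n) := lt_of_le_of_lt (by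
          have hc2 := (Nat.cast_le (α := ℝ)).mpr hn
          have : (1:ℝ) / (n+1) ≤ 1 / (N+1) := by
            apply one_div_le_one_div_of_le (by positivity); linarith
          linarith) (hzlt n)
        rw [abs_le]
        constructor <;> nlinarith [hle _ (hzc m), hle _ (hzc n)]
      have h2 := (hcomp m n).trans h1
      rw [dist_eq_norm]
      calc ‖(z m : X) - z n‖ = ε⁻¹ * (ε * ‖(z m : X) - z n‖) := by field_simp
        _ ≤ ε⁻¹ * (1 / (N+1)) := mul_le_mul_of_nonneg_left h2 (by positivity)
    have hcauchy : CauchySeq (fun n => (z n : X)) := by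
      apply cauchySeq_of_le_tendsto_0 (fun N : ℕ => ε⁻¹ * (1 / (N + 1)))
        (fun m n N hm hn => hdist m n N hm hn)
      have h3 : Tendsto (fun N : ℕ => ε⁻¹ * (1 / ((N:ℝ) + 1))) atTop (𝓝 (ε⁻¹ * 0)) :=
        tendsto_const_nhds.mul tendsto_one_div_add_atTop_nhds_zero_nat
      simpa using h3
    obtain ⟨zl, hzl⟩ := cauchySeq_tendsto_of_complete hcauchy
    have hzlnorm : ‖zl‖ ≤ 1 :=
      le_of_tendsto ((continuous_norm.tendsto zl).comp hzl)
        (Eventually.of_forall fun n => (z n).2.1)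
    have hfzl : Tendsto (fun n => f (z n : X)) atTop (𝓝 (f zl)) :=
      ((f.continuous.tendsto zl).comp hzl)
    have hfzls : f zl = s := by
      refine le_antisymm (le_of_tendsto hfzl (Eventually.of_forall fun n => hle _ (hzc n))) ?_
      have hlow : Tendsto (fun n : ℕ => s - 1 / ((n:ℝ) + 1)) atTop (𝓝 (s - 0)) :=
        tendsto_const_nhds.sub tendsto_one_div_add_atTop_nhds_zero_nat
      rw [sub_zero] at hlow
      exact le_of_tendsto_of_tendsto' hlow hfzl (fun n => (hzlt n).le)
    have key : ∀ n, ε * ‖zl - (z n : X)‖ ≤ f zl - f (z n) := by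
      intro n
      have ha : Tendsto (fun m => ε * ‖(z m : X) - z n‖) atTop (𝓝 (ε * ‖zl - (z n : X)‖)) :=
        tendsto_const_nhds.mul ((hzl.sub tendsto_const_nhds).norm)
      have hb : Tendsto (fun m => |f (z m : X) - f (z n : X)|) atTop
          (𝓝 |f zl - f (z n : X)|) := (hfzl.sub tendsto_const_nhds).abs
      have h4 := le_of_tendsto_of_tendsto' ha hb (fun m => hcomp m n)
      have habs : |f zl - f (z n : X)| = f zl - f (z n : X) := by
        rw [abs_of_nonneg]; rw [hfzls]; linarith [hle _ (hzc n)]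
      linarith [h4, habs.le, habs.ge]
    refine ⟨⟨zl, hzlnorm, hmem _ _ (key 0) (z 0).2.2⟩, ?_⟩
    intro a ha
    by_cases hex : ∃ n, r a (z n)
    · obtain ⟨n, h⟩ := hex
      exact htrans h (key n)
    · push_neg at hex
      have hall : ∀ n, r (z n) a := by
        intro n
        rcases eq_or_ne a (z n) with h | h
        · exact absurd (show r a (z n) by rw [h]; exact hrefl _) (hex n)
        · rcases hc.total ha (hzc n) with h1 | h1
          · exact (hex n h1).elim
          · exact h1
      have hconv : Tendsto (fun n => (z n : X)) atTop (𝓝 (a : X)) := by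
        rw [tendsto_iff_dist_tendsto_zero]
        apply squeeze_zero (fun n => dist_nonneg) (g := fun n : ℕ => ε⁻¹ * (1 / ((n:ℝ)+1)))
        · intro n
          have h5 : ε * ‖(a : X) - z n‖ ≤ f a - f (z n) := hall n
          have h6 : f a - f (z n) ≤ 1 / ((n:ℝ)+1) := by
            have := hle _ ha
            have := hzlt n
            linarith
          rw [dist_comm, dist_eq_norm]
          calc ‖(a : X) - z n‖ = ε⁻¹ * (ε * ‖(a : X) - z n‖) := by field_simp
            _ ≤ ε⁻¹ * (1 / ((n:ℝ)+1)) :=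
              mul_le_mul_of_nonneg_left (h5.trans h6) (by positivity)
        · have h3 : Tendsto (fun N : ℕ => ε⁻¹ * (1 / ((N:ℝ) + 1))) atTop (𝓝 (ε⁻¹ * 0)) :=
            tendsto_const_nhds.mul tendsto_one_div_add_atTop_nhds_zero_nat
          simpa using h3
      have haeq : (a : X) = zl := tendsto_nhds_unique hconv hzl
      show ε * ‖zl - (a : X)‖ ≤ f zl - f a
      rw [haeq]; simp
  refine ⟨m, m.2.1, m.2.2, ?_⟩
  intro w hw hr
  have hwS : ε * ‖w - x‖ ≤ f w - f x := hmem _ _ hr m.2.2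
  have hr' : r m ⟨w, hw, hwS⟩ := hr
  have h8 := hm ⟨w, hw, hwS⟩ hr'
  have h7 : (⟨w, hw, hwS⟩ : S) = m := hantisym h8 hr'
  exact congrArg Subtype.val h7

end BPBAux

section BPBAux2

variable {X : Type*} [NormedAddCommGroup X] [NormedSpace ℝ X]

theorem bpb_support (f : StrongDual ℝ X) (hf : ‖f‖ = 1) {ε : ℝ} (hε : 0 < ε)
    (hε1 : ε < 1) {z : X} (hz : ‖z‖ = 1)
    (hmax : ∀ w, ‖w‖ ≤ 1 → ε * ‖w - z‖ ≤ f w - f z → w = z) :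
    ∃ g : StrongDual ℝ X, ‖g‖ = 1 ∧ g z = 1 ∧ ∀ v, ε * ‖v‖ ≤ f v → 0 ≤ g v := by
  set K : Set X := {v | ε * ‖v‖ ≤ f v} with hK
  have hKconv : Convex ℝ K := by
    intro v hv w hw a b ha hb hab
    have h1 : ε * ‖a • v + b • w‖ ≤ a * (ε * ‖v‖) + b * (ε * ‖w‖) := by
      calc ε * ‖a • v + b • w‖ ≤ ε * (‖a • v‖ + ‖b • w‖) :=
            mul_le_mul_of_nonneg_left (norm_add_le _ _) hε.le
        _ = a * (ε * ‖v‖) + b * (ε * ‖w‖) := by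
            rw [norm_smul, norm_smul, Real.norm_eq_abs, Real.norm_eq_abs,
              abs_of_nonneg ha, abs_of_nonneg hb]; ring
    have hv' : ε * ‖v‖ ≤ f v := hv
    have hw' : ε * ‖w‖ ≤ f w := hw
    show ε * ‖a • v + b • w‖ ≤ f (a • v + b • w)
    rw [map_add, map_smul, map_smul]
    have := mul_le_mul_of_nonneg_left hv' ha
    have := mul_le_mul_of_nonneg_left hw' hb
    simp only [smul_eq_mul]
    linarith
  have hzeroK : (0 : X) ∈ K := by simp [hK]
  -- a point u with f u > (1+ε)/2
  obtain ⟨u, hu1, hu2⟩ : ∃ u : X, ‖u‖ ≤ 1 ∧ (1 + ε) / 2 < f u := by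
    by_contra h
    push_neg at h
    have : ‖f‖ ≤ (1 + ε) / 2 := by
      apply ContinuousLinearMap.opNorm_le_of_unit_norm (by linarith)
      intro v hv
      rw [Real.norm_eq_abs, abs_le]
      constructor
      · have := h (-v) (by simp [hv])
        simp only [map_neg] at this
        linarith
      · exact h v hv.le
    rw [hf] at this; linarith
  have hune : u ≠ 0 := by
    intro h; rw [h] at hu2; simp at hu2; linarith
  set rr : ℝ := (f u - ε) / (1 + ε) with hrr
  have hfue : ε < f u := by linarith [hu2, (by linarith : ε < (1+ε)/2)]
  have hrpos : 0 < rr := div_pos (by linarith) (by linarith)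
  have hball : Metric.ball u rr ⊆ K := by
    intro v hv
    rw [Metric.mem_ball, dist_eq_norm] at hv
    show ε * ‖v‖ ≤ f v
    have h1 : f v = f u + f (v - u) := by rw [map_sub]; ring
    have h2 : |f (v - u)| ≤ ‖v - u‖ := by
      have := f.le_opNorm (v - u); rw [hf, one_mul] at this
      simpa [Real.norm_eq_abs] using this
    have h3 : ‖v‖ ≤ 1 + rr := by
      calc ‖v‖ ≤ ‖u‖ + ‖v - u‖ := by
            have := norm_add_le u (v - u); simpa using this
        _ ≤ 1 + rr := by linarith [hv.le]
    have h4 : rr * (1 + ε) = f u - ε := by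
      rw [hrr, div_mul_cancel₀ _ (by linarith : (0:ℝ) < 1 + ε).ne']
    nlinarith [abs_le.mp h2, hv]
  have huK : u ∈ interior K := mem_interior_iff_mem_nhds.mpr
    (Filter.mem_of_superset (Metric.ball_mem_nhds u hrpos) hball)
  have hzeronotint : (0 : X) ∉ interior K := by
    intro h0
    rw [mem_interior_iff_mem_nhds, Metric.mem_nhds_iff] at h0
    obtain ⟨ρ, hρ, hsub⟩ := h0
    have hv : -(ρ / 2 / ‖u‖) • u ∈ Metric.ball (0 : X) ρ := by
      rw [Metric.mem_ball, dist_zero_right, norm_smul, Real.norm_eq_abs]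
      rw [abs_neg, abs_of_nonneg (by positivity)]
      have hun : 0 < ‖u‖ := norm_pos_iff.mpr hune
      rw [div_mul_cancel₀ _ hun.ne']
      linarith
    have := hsub hv
    have h5 : ε * ‖-(ρ / 2 / ‖u‖) • u‖ ≤ f (-(ρ / 2 / ‖u‖) • u) := this
    rw [map_smul] at h5
    have hun : 0 < ‖u‖ := norm_pos_iff.mpr hune
    have h6 : 0 ≤ ε * ‖-(ρ / 2 / ‖u‖) • u‖ := mul_nonneg hε.le (norm_nonneg _)
    simp only [smul_eq_mul, neg_mul] at h5
    have h7 : 0 < ρ / 2 / ‖u‖ := by positivity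
    have h8 := mul_pos h7 (hε.trans hfue)
    linarith
  -- The separating hyperplane
  set s : Set X := (z + ·) '' interior K with hset
  have hsopen : IsOpen s := (isOpenMap_add_left z) _ isOpen_interior
  have hsconv : Convex ℝ s := hKconv.interior.translate z
  have hdisj : Disjoint s (Metric.closedBall (0 : X) 1) := by
    rw [Set.disjoint_left]
    rintro b ⟨w, hw, rfl⟩ hb
    rw [Metric.mem_closedBall, dist_zero_right] at hb
    have hwK : w ∈ K := interior_subset hw
    have : z + w = z := by
      apply hmax _ hb
      have : ε * ‖w‖ ≤ f w := hwK
      simp only [add_sub_cancel_left, map_add]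
      linarith
    have hw0 : w = 0 := by
      have h9 := this
      rwa [add_eq_left] at h9
    exact hzeronotint (hw0 ▸ hw)
  obtain ⟨g, c, hglt, hgge⟩ := geometric_hahn_banach_open hsconv hsopen
    (convex_closedBall (0 : X) 1) hdisj
  have hgz_ge : c ≤ g z := hgge z (by simp [hz])
  have hzK : ∀ k ∈ K, g (z + k) ≤ c := by
    intro k hk
    have hseq : Tendsto (fun n : ℕ => g (z + ((1 - 1/(n+2) : ℝ) • k + (1/(n+2) : ℝ) • u)))
        atTop (𝓝 (g (z + k))) := by
      have h1 : Tendsto (fun n : ℕ => (1/((n:ℝ)+2))) atTop (𝓝 0) := by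
        apply squeeze_zero (fun n => by positivity) (g := fun n : ℕ => 1/((n:ℝ)+1))
          (fun n => by
            apply one_div_le_one_div_of_le (by positivity)
            linarith [Nat.cast_nonneg (α := ℝ) n])
          tendsto_one_div_add_atTop_nhds_zero_nat
      have h2 : Tendsto (fun n : ℕ => (1 - 1/((n:ℝ)+2)) • k + (1/((n:ℝ)+2)) • u)
          atTop (𝓝 k) := by
        have ha := (tendsto_const_nhds (x := (1:ℝ)) (f := atTop (α := ℕ))).sub h1
        rw [sub_zero] at ha
        have hb := ha.smul (tendsto_const_nhds (x := k) (f := atTop (α := ℕ)))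
        rw [one_smul] at hb
        have hcc := h1.smul (tendsto_const_nhds (x := u) (f := atTop (α := ℕ)))
        rw [zero_smul] at hcc
        simpa using hb.add hcc
      exact (g.continuous.tendsto _).comp ((tendsto_const_nhds (x := z)).add h2)
    apply le_of_tendsto hseq
    apply Eventually.of_forall
    intro n
    have hmem : (1 - 1/((n:ℝ)+2)) • k + (1/((n:ℝ)+2)) • u ∈ interior K := by
      have hpos : (0:ℝ) < 1/((n:ℝ)+2) := by positivity
      have hle1 : (1:ℝ)/((n:ℝ)+2) ≤ 1 := by
        rw [div_le_one (by positivity)]; linarith [Nat.cast_nonneg (α := ℝ) n]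
      exact hKconv.combo_self_interior_mem_interior hk huK
        (a := 1 - 1/((n:ℝ)+2)) (b := 1/((n:ℝ)+2)) (by linarith) hpos (by ring)
    exact (hglt _ ⟨_, hmem, rfl⟩).le
  have hgz_le : g z ≤ c := by simpa using hzK 0 hzeroK
  have hgzc : g z = c := le_antisymm hgz_le hgz_ge
  have hgK : ∀ k ∈ K, g k ≤ 0 := by
    intro k hk
    have := hzK k hk
    rw [map_add, hgzc] at this
    linarith
  have hgu : g u < 0 := by
    have := hglt (z + u) ⟨u, huK, rfl⟩
    rw [map_add, hgzc] at this
    linarith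
  set h : StrongDual ℝ X := -g with hh
  have hhK : ∀ k ∈ K, 0 ≤ h k := fun k hk => by simp [hh]; linarith [hgK k hk]
  have hhb : ∀ b : X, ‖b‖ ≤ 1 → h b ≤ -c := by
    intro b hb
    have := hgge b (by simpa using hb)
    simp [hh]; linarith
  have hczero : 0 < -c := by
    have h3 : 0 < ‖u‖ := norm_pos_iff.mpr hune
    have h1 : 0 < h u := by simp [hh]; linarith
    have hnu : ‖‖u‖⁻¹ • u‖ ≤ 1 := by
      rw [norm_smul, Real.norm_eq_abs, abs_of_nonneg (inv_nonneg.mpr (norm_nonneg u)),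
        inv_mul_cancel₀ h3.ne']
    have h4 := hhb _ hnu
    rw [map_smul, smul_eq_mul] at h4
    have h5 := mul_pos (inv_pos.mpr h3) h1
    linarith
  have hhnorm : ‖h‖ = -c := by
    apply le_antisymm
    · apply ContinuousLinearMap.opNorm_le_of_unit_norm hczero.le
      intro v hv
      rw [Real.norm_eq_abs, abs_le]
      exact ⟨by linarith [hhb (-v) (by simp [hv]), (map_neg h v)], hhb v hv.le⟩
    · have : h z = -c := by simp [hh, hgzc]
      calc -c = h z := this.symm
        _ ≤ ‖h z‖ := le_abs_self _
        _ ≤ ‖h‖ * ‖z‖ := h.le_opNorm z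
        _ = ‖h‖ := by rw [hz, mul_one]
  refine ⟨(-c)⁻¹ • h, ?_, ?_, ?_⟩
  · rw [norm_smul, Real.norm_eq_abs, abs_of_nonneg (inv_nonneg.mpr hczero.le), hhnorm,
      inv_mul_cancel₀ hczero.ne']
  · have : h z = -c := by simp [hh, hgzc]
    simp [this, inv_mul_cancel₀ hczero.ne', inv_mul_cancel₀ (neg_ne_zero.mp hczero.ne')]
  · intro v hv
    have := hhK v hv
    simp only [ContinuousLinearMap.smul_apply, smul_eq_mul]
    positivity

theorem bpb_phelps (f g : StrongDual ℝ X) (hf : ‖f‖ ≤ 1) (hg : ‖g‖ ≤ 1) {z : X}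
    (hz : ‖z‖ = 1) (hgz : g z = 1) {ε δ : ℝ} (hε : 0 < ε) (hδ0 : 0 ≤ δ)
    (hfz : 1 - δ ≤ f z)
    (hK : ∀ v, ε * ‖v‖ ≤ f v → 0 ≤ g v) : ‖f - g‖ ≤ 2 * ε + δ := by
  have hker : ∀ w : X, g w = 0 → f w ≤ ε * ‖w‖ := by
    intro w hw
    have key : ∀ t : ℝ, 0 < t → f w < ε * ‖w‖ + t * (ε + f z) := by
      intro t ht
      have h1 : g (w - t • z) < 0 := by
        rw [map_sub, map_smul, hw, hgz, smul_eq_mul, mul_one]; linarith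
      have h2 : ¬(ε * ‖w - t • z‖ ≤ f (w - t • z)) := fun h => absurd (hK _ h) (by linarith)
      push_neg at h2
      have h3 : ‖w - t • z‖ ≤ ‖w‖ + t := by
        calc ‖w - t • z‖ ≤ ‖w‖ + ‖t • z‖ := norm_sub_le _ _
          _ = ‖w‖ + t := by rw [norm_smul, Real.norm_eq_abs, abs_of_pos ht, hz, mul_one]
      rw [map_sub, map_smul, smul_eq_mul] at h2
      nlinarith
    by_contra hcon
    push_neg at hcon
    have hfz1 : f z ≤ 1 := by
      have := f.le_opNorm z
      rw [hz, mul_one] at this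
      have := (le_abs_self (f z)).trans (by simpa [Real.norm_eq_abs] using this)
      linarith
    set t0 := (f w - ε * ‖w‖) / (2 * (ε + 1)) with ht0
    have ht0pos : 0 < t0 := by
      apply div_pos (by linarith) (by linarith)
    have := key t0 ht0pos
    have h4 : t0 * (ε + f z) ≤ t0 * (ε + 1) := by
      apply mul_le_mul_of_nonneg_left (by linarith) ht0pos.le
    have h5 : t0 * (ε + 1) = (f w - ε * ‖w‖) / 2 := by
      rw [ht0]; field_simp
    linarith
  have habs : ∀ v : X, ‖v‖ = 1 → (f - g) v ≤ 2 * ε + δ := by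
    intro v hv
    set w := v - (g v) • z with hw
    have hgw : g w = 0 := by rw [hw, map_sub, map_smul, hgz, smul_eq_mul, mul_one, sub_self]
    have hwn : ‖w‖ ≤ 2 := by
      have h1 : |g v| ≤ 1 := by
        have := g.le_opNorm v
        rw [hv, mul_one] at this
        have h2 : |g v| ≤ ‖g‖ := by simpa [Real.norm_eq_abs] using this
        linarith
      calc ‖w‖ ≤ ‖v‖ + ‖(g v) • z‖ := norm_sub_le _ _
        _ = 1 + |g v| := by rw [hv, norm_smul, Real.norm_eq_abs, hz, mul_one]
        _ ≤ 2 := by linarith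
    have h6 : f w ≤ ε * ‖w‖ := hker w hgw
    have h7 : f v = f w + (g v) * (f z) := by rw [hw, map_sub, map_smul, smul_eq_mul]; ring
    have hfz1 : f z ≤ 1 := by
      have := f.le_opNorm z
      rw [hz, mul_one] at this
      have := (le_abs_self (f z)).trans (by simpa [Real.norm_eq_abs] using this)
      linarith
    have h8 : |g v| ≤ 1 := by
      have := g.le_opNorm v
      rw [hv, mul_one] at this
      have h2 : |g v| ≤ ‖g‖ := by simpa [Real.norm_eq_abs] using this
      linarith
    have h9 : (g v) * (f z) - g v ≤ δ := by
      have : (g v) * (f z - 1) ≤ |g v| * |f z - 1| := by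
        calc (g v) * (f z - 1) ≤ |(g v) * (f z - 1)| := le_abs_self _
          _ = |g v| * |f z - 1| := abs_mul _ _
      have h10 : |f z - 1| ≤ δ := by rw [abs_le]; constructor <;> linarith
      nlinarith [abs_nonneg (g v)]
    have h11 : (f - g) v = f w + ((g v) * (f z) - g v) := by
      simp only [ContinuousLinearMap.sub_apply]; linarith [h7]
    rw [h11]
    nlinarith
  apply ContinuousLinearMap.opNorm_le_of_unit_norm (by linarith)
  intro v hv
  rw [Real.norm_eq_abs, abs_le]
  constructor
  · have := habs (-v) (by simp [hv])
    rw [map_neg] at this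
    linarith
  · exact habs v hv

theorem bpb {X : Type*} [NormedAddCommGroup X] [NormedSpace ℝ X] [CompleteSpace X]
    (f : StrongDual ℝ X) (hf : ‖f‖ = 1) {x : X} (hx : ‖x‖ = 1) {ε : ℝ}
    (hε : 0 < ε) (hε2 : ε ≤ 1/2) (hfx : 1 - ε^2/2 ≤ f x) :
    ∃ (z : X) (g : StrongDual ℝ X),
      ‖z‖ = 1 ∧ ‖g‖ = 1 ∧ g z = 1 ∧ ‖z - x‖ ≤ ε ∧ ‖f - g‖ ≤ 3 * ε := by
  obtain ⟨z, hz1, hz2, hzmax⟩ := bpb_max f hε hx.le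
  have hfx1 : f x ≤ 1 := by
    have := f.le_opNorm x
    rw [hf, hx, one_mul] at this
    linarith [(le_abs_self (f x)).trans (by simpa [Real.norm_eq_abs] using this)]
  have hfz1 : f z ≤ 1 := by
    have := f.le_opNorm z
    rw [hf, one_mul] at this
    linarith [(le_abs_self (f z)).trans (by simpa [Real.norm_eq_abs] using this), hz1,
      abs_nonneg (f z)]
  have hfzx : f x ≤ f z := by nlinarith [norm_nonneg (z - x), hz2]
  have hfz : 1 - ε^2/2 ≤ f z := hfx.trans hfzx
  have hεfz : ε < f z := by nlinarith
  have hzx : ‖z - x‖ ≤ ε := by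
    have h1 : ε * ‖z - x‖ ≤ ε^2/2 := by linarith [hz2]
    have h2 : ‖z - x‖ ≤ ε/2 := by
      rw [← mul_le_mul_iff_right₀ hε]; nlinarith
    linarith
  have hzne : z ≠ 0 := by
    intro h; rw [h] at hεfz; simp at hεfz; linarith
  have hzn : 0 < ‖z‖ := norm_pos_iff.mpr hzne
  have hznorm : ‖z‖ = 1 := by
    have hw : ‖(‖z‖⁻¹ • z)‖ ≤ 1 := by
      rw [norm_smul, Real.norm_eq_abs, abs_of_nonneg (inv_nonneg.mpr (norm_nonneg z)),
        inv_mul_cancel₀ hzn.ne']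
    have harg : ε * ‖(‖z‖⁻¹ • z) - z‖ ≤ f (‖z‖⁻¹ • z) - f z := by
      have heq : (‖z‖⁻¹ • z) - z = (‖z‖⁻¹ - 1) • z := by rw [sub_smul, one_smul]
      rw [heq, norm_smul, Real.norm_eq_abs, map_smul, smul_eq_mul]
      have hinv1 : 1 ≤ ‖z‖⁻¹ := by
        rw [le_inv_comm₀] <;> simp [hzn, hz1]
      rw [abs_of_nonneg (by linarith)]
      have : ε * ‖z‖ ≤ f z := by nlinarith
      nlinarith [sub_nonneg.mpr hinv1]
    have := hzmax _ hw harg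
    have h2 : ‖(‖z‖⁻¹ • z)‖ = 1 := by
      rw [norm_smul, Real.norm_eq_abs, abs_of_nonneg (inv_nonneg.mpr (norm_nonneg z)),
        inv_mul_cancel₀ hzn.ne']
    rw [this] at h2
    exact h2
  obtain ⟨g, hg1, hg2, hg3⟩ := bpb_support f hf hε (by linarith) hznorm hzmax
  refine ⟨z, g, hznorm, hg1, hg2, hzx, ?_⟩
  have := bpb_phelps f g hf.le hg1.le hznorm hg2 hε (by positivity : (0:ℝ) ≤ ε^2/2) hfz hg3
  nlinarith

end BPBAux2

theorem uacs_iff_norming_sequences (X : Type*) [NormedAddCommGroup X] [NormedSpace ℝ X]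
    [CompleteSpace X] :
    IsUacs X ↔
      ∀ (x y : ℕ → X) (f : ℕ → StrongDual ℝ X),
        (∀ n, ‖x n‖ = 1) → (∀ n, ‖y n‖ = 1) → (∀ n, ‖f n‖ = 1) →
        Tendsto (fun n => ‖x n + y n‖) atTop (𝓝 2) →
        (∀ n, f n (x n) = 1) →
        Tendsto (fun n => f n (y n)) atTop (𝓝 1) := by
  constructor
  · intro h x y f h1 h2 h3 h4 h5
    exact h x y f h1 h2 h3 h4 (by simp only [h5]; exact tendsto_const_nhds)
  · intro H x y f h1 h2 h3 hxy hfx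
    set δ : ℕ → ℝ := fun n => 1 - f n (x n) with hδ
    have hδ0 : ∀ n, 0 ≤ δ n := by
      intro n
      have hb := (f n).le_opNorm (x n)
      rw [h3, h1, one_mul] at hb
      have := (le_abs_self _).trans (by simpa [Real.norm_eq_abs] using hb)
      simp only [hδ, sub_nonneg]
      linarith
    have hδt : Tendsto δ atTop (𝓝 0) := by
      have := (tendsto_const_nhds (x := (1:ℝ)) (f := atTop (α := ℕ))).sub hfx
      simpa using this
    set ε : ℕ → ℝ := fun n => Real.sqrt (2 * δ n + 1/(n+1)) with hε
    have hεpos : ∀ n, 0 < ε n := fun n =>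
      Real.sqrt_pos.mpr (by have := hδ0 n; positivity)
    have hεt : Tendsto ε atTop (𝓝 0) := by
      have h0 : Tendsto (fun n : ℕ => 2 * δ n + 1/((n:ℝ)+1)) atTop (𝓝 0) := by
        have := ((tendsto_const_nhds (x := (2:ℝ)) (f := atTop (α := ℕ))).mul hδt).add
          tendsto_one_div_add_atTop_nhds_zero_nat
        simpa using this
      have h0' := (Real.continuous_sqrt.tendsto 0).comp h0
      rw [Real.sqrt_zero] at h0'
      exact h0'.congr (fun n => by simp [hε, one_div])
    have hsq : ∀ n, (ε n)^2 = 2 * δ n + 1/(n+1) :=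
      fun n => Real.sq_sqrt (by have := hδ0 n; positivity)
    have hfxn : ∀ n, 1 - (ε n)^2/2 ≤ f n (x n) := by
      intro n
      rw [hsq n]
      have hp : (0:ℝ) < 1/((n:ℝ)+1) := by positivity
      simp only [hδ]
      linarith
    have hchoice : ∀ n, ∃ (z : X) (g : StrongDual ℝ X), ‖z‖ = 1 ∧ ‖g‖ = 1 ∧ g z = 1 ∧
        (ε n ≤ 1/2 → ‖z - x n‖ ≤ ε n ∧ ‖f n - g‖ ≤ 3 * ε n) := by
      intro n
      by_cases hc : ε n ≤ 1/2
      · obtain ⟨z, g, a1, a2, a3, a4, a5⟩ := bpb (f n) (h3 n) (h1 n) (hεpos n) hc (hfxn n)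
        exact ⟨z, g, a1, a2, a3, fun _ => ⟨a4, a5⟩⟩
      · have hxne : x n ≠ 0 := by
          intro hxn
          have := h1 n
          rw [hxn] at this
          simp at this
        obtain ⟨g, hg1, hg2⟩ := exists_dual_vector ℝ (x n) (norm_ne_zero_iff.mpr hxne)
        exact ⟨x n, g, h1 n, hg1, by simp [hg2, h1 n], fun hcon => absurd hcon hc⟩
    choose z g hzn hgn hgz hclose using hchoice
    have hev : ∀ᶠ n in atTop, ε n ≤ 1/2 :=
      hεt.eventually (eventually_le_nhds (by norm_num))
    have hnear : ∀ n, ε n ≤ 1/2 → |‖z n + y n‖ - ‖x n + y n‖| ≤ ε n := by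
      intro n hn
      have h5 : ‖z n + y n‖ - ‖x n + y n‖ = ‖z n + y n‖ - ‖x n + y n‖ := rfl
      have h6 := abs_norm_sub_norm_le (z n + y n) (x n + y n)
      have h7 : (z n + y n) - (x n + y n) = z n - x n := by abel
      rw [h7] at h6
      exact h6.trans ((hclose n hn).1)
    have hzy : Tendsto (fun n => ‖z n + y n‖) atTop (𝓝 2) := by
      have hlow : Tendsto (fun n => ‖x n + y n‖ - ε n) atTop (𝓝 2) := by
        have := hxy.sub hεt; simpa using this
      have hhigh : Tendsto (fun n => ‖x n + y n‖ + ε n) atTop (𝓝 2) := by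
        have := hxy.add hεt; simpa using this
      apply tendsto_of_tendsto_of_tendsto_of_le_of_le' hlow hhigh
      · filter_upwards [hev] with n hn
        have := abs_le.mp (hnear n hn)
        linarith [this.1]
      · filter_upwards [hev] with n hn
        have := abs_le.mp (hnear n hn)
        linarith [this.2]
    have hgy : Tendsto (fun n => g n (y n)) atTop (𝓝 1) := H z y g hzn h2 hgn hzy hgz
    have hdiff : Tendsto (fun n => f n (y n) - g n (y n)) atTop (𝓝 0) := by
      apply squeeze_zero_norm' (a := fun n => 3 * ε n)
      · filter_upwards [hev] with n hn
        have h8 : f n (y n) - g n (y n) = (f n - g n) (y n) := by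
          simp [ContinuousLinearMap.sub_apply]
        rw [Real.norm_eq_abs, h8]
        have h9 := (f n - g n).le_opNorm (y n)
        rw [h2, mul_one] at h9
        have h10 : |(f n - g n) (y n)| ≤ ‖f n - g n‖ := by
          simpa [Real.norm_eq_abs] using h9
        exact h10.trans ((hclose n hn).2)
      · have := (tendsto_const_nhds (x := (3:ℝ)) (f := atTop (α := ℕ))).mul hεt
        simpa using this
    have := hdiff.add hgy
    simpa using this
end

section
/- A Banach space X is uacs if and only if for every ε > 0 there exists δ > 0 such that for all t ∈ [0,δ] and all x, y ∈ S_X with ‖x+y‖ ≥ 2(1−t), one has ‖x+ty‖ + ‖x−ty‖ ≤ 2 + εt. -/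
open Filter Topology

theorem uacs_iff_epsilon_delta (X : Type*) [NormedAddCommGroup X] [NormedSpace ℝ X]
    [CompleteSpace X] :
    IsUacs X ↔
      ∀ ε : ℝ, 0 < ε → ∃ δ > (0 : ℝ), ∀ t ∈ Set.Icc (0 : ℝ) δ, ∀ x y : X,
        ‖x‖ = 1 → ‖y‖ = 1 → 2 * (1 - t) ≤ ‖x + y‖ →
        ‖x + t • y‖ + ‖x - t • y‖ ≤ 2 + ε * t := by
  constructor
  · intro hU
    by_contra hcon
    push_neg at hcon
    obtain ⟨ε, hε, hcon⟩ := hcon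
    have key : ∀ n : ℕ, ∃ t : ℝ, (0 < t ∧ t ≤ 1) ∧ t ≤ 1/(n+1) ∧ ∃ x y : X,
        ‖x‖ = 1 ∧ ‖y‖ = 1 ∧ 2 * (1 - t) ≤ ‖x + y‖ ∧
        2 + ε * t < ‖x + t • y‖ + ‖x - t • y‖ := by
      intro n
      obtain ⟨t, ht, x, y, hx, hy, hxy, hlt⟩ := hcon (1/(n+1)) (by positivity)
      have ht1 : t ≤ 1/(n+1) := ht.2
      have ht1' : t ≤ 1 := ht1.trans (by
        rw [div_le_one (by positivity)]
        linarith [Nat.cast_nonneg (α := ℝ) n])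
      have ht0 : 0 < t := by
        rcases ht.1.lt_or_eq with h' | h'
        · exact h'
        · exfalso
          rw [← h'] at hlt
          simp [hx] at hlt
          linarith
      exact ⟨t, ⟨ht0, ht1'⟩, ht1, x, y, hx, hy, hxy, hlt⟩
    choose t ht htlt x y hx hy hxy hlt using key
    have ht0 : Tendsto t atTop (𝓝 0) :=
      squeeze_zero (fun n => (ht n).1.le) htlt tendsto_one_div_add_atTop_nhds_zero_nat
    have hzub : ∀ n, ‖x n + t n • y n‖ ≤ 1 + t n := by
      intro n
      calc ‖x n + t n • y n‖ ≤ ‖x n‖ + ‖t n • y n‖ := norm_add_le _ _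
        _ = 1 + t n := by
            rw [hx n, norm_smul, Real.norm_eq_abs, abs_of_pos (ht n).1, hy n, mul_one]
    have hzlb : ∀ n, 1 + (ε - 1) * t n < ‖x n - t n • y n‖ := by
      intro n
      have h1 := hlt n
      have h2 := hzub n
      nlinarith
    have hzpos : ∀ n, 0 < ‖x n - t n • y n‖ := by
      intro n
      have h1 := hzlb n
      nlinarith [(ht n).1, (ht n).2, mul_pos hε (ht n).1]
    have hzne : ∀ n, x n - t n • y n ≠ 0 := fun n => norm_pos_iff.mp (hzpos n)
    choose g hg1 hg2 using fun n => exists_dual_vector ℝ (x n - t n • y n) (norm_ne_zero_iff.mpr (hzne n))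
    have hexp : ∀ n, g n (x n) - t n * g n (y n) = ‖x n - t n • y n‖ := by
      intro n
      have h1 := hg2 n
      rw [map_sub, map_smul, smul_eq_mul] at h1
      exact_mod_cast h1
    have hgabs : ∀ n (v : X), |g n v| ≤ ‖v‖ := by
      intro n v
      have h1 := (g n).le_opNorm v
      rwa [hg1 n, one_mul, Real.norm_eq_abs] at h1
    have hgx_ub : ∀ n, g n (x n) ≤ 1 := by
      intro n
      have := hgabs n (x n)
      rw [hx n] at this
      linarith [le_abs_self (g n (x n))]
    have hgx_lb : ∀ n, 1 - 2 * t n ≤ g n (x n) := by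
      intro n
      have h1 := hexp n
      have h2 : 1 - t n ≤ ‖x n - t n • y n‖ := by
        have h3 := norm_sub_norm_le (x n) (t n • y n)
        rw [hx n, norm_smul, Real.norm_eq_abs, abs_of_pos (ht n).1, hy n, mul_one] at h3
        linarith
      have h4 : -1 ≤ g n (y n) := by
        have := hgabs n (y n)
        rw [hy n] at this
        linarith [neg_abs_le (g n (y n))]
      nlinarith [(ht n).1, mul_le_mul_of_nonneg_left h4 (ht n).1.le]
    have hgx : Tendsto (fun n => g n (x n)) atTop (𝓝 1) := by
      have h2t : Tendsto (fun n => 1 - 2 * t n) atTop (𝓝 1) := by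
        have := (tendsto_const_nhds (x := (1:ℝ)) (f := atTop)).sub (ht0.const_mul (2:ℝ))
        simpa using this
      exact tendsto_of_tendsto_of_tendsto_of_le_of_le h2t tendsto_const_nhds hgx_lb hgx_ub
    have hxy2 : Tendsto (fun n => ‖x n + y n‖) atTop (𝓝 2) := by
      have hub : ∀ n, ‖x n + y n‖ ≤ 2 := by
        intro n
        have := norm_add_le (x n) (y n)
        rw [hx n, hy n] at this
        linarith
      have hlbt : Tendsto (fun n => 2 * (1 - t n)) atTop (𝓝 2) := by
        have := ((tendsto_const_nhds (x := (1:ℝ)) (f := atTop)).sub ht0).const_mul (2:ℝ)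
        simpa using this
      exact tendsto_of_tendsto_of_tendsto_of_le_of_le hlbt tendsto_const_nhds hxy hub
    have hgy := hU x y g hx hy hg1 hxy2 hgx
    have hgyub : ∀ n, g n (y n) < 1 - ε := by
      intro n
      have h1 := hexp n
      have h2 := hzlb n
      have h3 := hgx_ub n
      have h4 : g n (y n) * t n < (1 - ε) * t n := by nlinarith
      exact lt_of_mul_lt_mul_right h4 (ht n).1.le
    have hev := (hgy.eventually (eventually_gt_nhds (show 1 - ε < 1 by linarith))).exists
    obtain ⟨n, hn⟩ := hev
    exact absurd hn (not_lt.mpr (hgyub n).le)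
  · intro h x y f hx hy hf hxy hfx
    have fabs : ∀ n (v : X), |f n v| ≤ ‖v‖ := by
      intro n v
      have h1 := (f n).le_opNorm v
      rwa [hf n, one_mul, Real.norm_eq_abs] at h1
    rw [Metric.tendsto_atTop]
    intro ε' hε'
    obtain ⟨δ, hδ, H⟩ := h (ε'/2) (by linarith)
    set δ' := min δ 1 with hδ'def
    have hδ'pos : 0 < δ' := lt_min hδ one_pos
    have hδ'1 : δ' ≤ 1 := min_le_right _ _
    have hδ'δ : δ' ≤ δ := min_le_left _ _
    have h1 : ∀ᶠ n in atTop, 1 - δ' * ε' / 4 < f n (x n) :=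
      hfx.eventually (eventually_gt_nhds (by nlinarith))
    have h2 : ∀ᶠ n in atTop, 2 - δ' * ε' / 4 < ‖x n + y n‖ :=
      hxy.eventually (eventually_gt_nhds (by nlinarith))
    have h3 : ∀ᶠ n in atTop, 2 - 2 * δ' < ‖x n + y n‖ :=
      hxy.eventually (eventually_gt_nhds (by linarith))
    obtain ⟨N, hN⟩ := Filter.eventually_atTop.mp ((h1.and h2).and h3)
    refine ⟨N, fun n hn => ?_⟩
    obtain ⟨⟨hb1, hb2⟩, hb3⟩ := hN n hn
    have key := H δ' ⟨hδ'pos.le, hδ'δ⟩ (x n) (y n) (hx n) (hy n) (by linarith)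
    have A : f n (x n) - δ' * f n (y n) ≤ ‖x n - δ' • y n‖ := by
      have h5 := fabs n (x n - δ' • y n)
      rw [map_sub, map_smul, smul_eq_mul] at h5
      linarith [le_abs_self (f n (x n) - δ' * f n (y n))]
    have B : ‖x n + y n‖ - (1 - δ') ≤ ‖x n + δ' • y n‖ := by
      have heq : x n + δ' • y n + (1 - δ') • y n = x n + y n := by
        rw [add_assoc, ← add_smul]
        norm_num
      have h6 := norm_add_le (x n + δ' • y n) ((1 - δ') • y n)
      rw [heq, norm_smul, Real.norm_eq_abs, abs_of_nonneg (by linarith), hy n, mul_one] at h6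
      linarith
    have hfy1 : f n (y n) ≤ 1 := by
      have := fabs n (y n)
      rw [hy n] at this
      linarith [le_abs_self (f n (y n))]
    have hfy2 : 1 - ε' < f n (y n) := by
      have h7 : δ' * f n (y n) ≥ f n (x n) + ‖x n + y n‖ - 3 + δ' - ε' / 2 * δ' := by
        linarith
      have h8 : δ' * (1 - ε') < δ' * f n (y n) := by nlinarith
      have := lt_of_mul_lt_mul_left h8 hδ'pos.le
      linarith
    rw [Real.dist_eq, abs_lt]
    constructor <;> linarith
end

section
/- If U is a closed subspace of a Banach space X and X is uacs, then the quotient X/U is uacs. -/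
open Filter Topology

section aux

variable {X : Type*} [NormedAddCommGroup X] [NormedSpace ℝ X]
  (U : Submodule ℝ X) [IsClosed (U : Set X)]

/-- The quotient map as a continuous linear map. -/
noncomputable def quotCLM : X →L[ℝ] X ⧸ U :=
  U.mkQ.mkContinuous 1 (fun m => by
    simpa using Submodule.Quotient.norm_mk_le U m)

@[simp] lemma quotCLM_apply (m : X) : quotCLM U m = Submodule.Quotient.mk m := rfl

lemma norm_quotCLM_le : ‖quotCLM U‖ ≤ 1 :=
  LinearMap.mkContinuous_norm_le _ zero_le_one _

lemma norm_comp_quotCLM (g : StrongDual ℝ (X ⧸ U)) :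
    ‖g.comp (quotCLM U)‖ = ‖g‖ := by
  refine le_antisymm ?_ ?_
  · calc ‖g.comp (quotCLM U)‖ ≤ ‖g‖ * ‖quotCLM U‖ := ContinuousLinearMap.opNorm_comp_le _ _
    _ ≤ ‖g‖ * 1 := by
        have := norm_quotCLM_le U
        nlinarith [norm_nonneg g]
    _ = ‖g‖ := mul_one _
  · refine g.opNorm_le_bound (norm_nonneg _) (fun v => ?_)
    refine le_of_forall_pos_le_add (fun ε hε => ?_)
    set C := ‖g.comp (quotCLM U)‖ with hC
    have hC0 : 0 ≤ C := norm_nonneg _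
    have hδ : (0:ℝ) < ε / (C + 1) := by positivity
    obtain ⟨m, hm, hmlt⟩ := Submodule.Quotient.norm_mk_lt v hδ
    have h1 : ‖g v‖ = ‖(g.comp (quotCLM U)) m‖ := by
      simp [hm]
    have h2 : ‖(g.comp (quotCLM U)) m‖ ≤ C * ‖m‖ :=
      ContinuousLinearMap.le_opNorm _ _
    have h3 : C * ‖m‖ ≤ C * (‖v‖ + ε / (C + 1)) := by
      apply mul_le_mul_of_nonneg_left hmlt.le hC0
    have h4 : C * (ε / (C + 1)) ≤ ε := by
      rw [div_eq_inv_mul]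
      have : C * ((C+1)⁻¹ * ε) = (C / (C+1)) * ε := by ring
      rw [this]
      have hq : C / (C + 1) ≤ 1 := by
        rw [div_le_one (by linarith)]; linarith
      nlinarith
    calc ‖g v‖ ≤ C * (‖v‖ + ε / (C + 1)) := by rw [h1]; exact h2.trans h3
      _ = C * ‖v‖ + C * (ε / (C+1)) := by ring
      _ ≤ C * ‖v‖ + ε := by linarith

end aux

theorem quotient_uacs (X : Type*) [NormedAddCommGroup X] [NormedSpace ℝ X] [CompleteSpace X]
    (U : Submodule ℝ X) [IsClosed (U : Set X)] (h : IsUacs X) :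
    IsUacs (X ⧸ U) := by
  intro x y f hx hy hf hxy hfx
  -- lift x and y
  have hxl : ∀ n : ℕ, ∃ m : X, Submodule.Quotient.mk m = x n ∧ ‖m‖ < ‖x n‖ + 1/(n+1) :=
    fun n => Submodule.Quotient.norm_mk_lt _ (by positivity)
  have hyl : ∀ n : ℕ, ∃ m : X, Submodule.Quotient.mk m = y n ∧ ‖m‖ < ‖y n‖ + 1/(n+1) :=
    fun n => Submodule.Quotient.norm_mk_lt _ (by positivity)
  choose a ha hna using hxl
  choose b hb hnb using hyl
  have ha1 : ∀ n, 1 ≤ ‖a n‖ := fun n => by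
    have := Submodule.Quotient.norm_mk_le U (a n)
    rw [ha n, hx n] at this; exact this
  have hb1 : ∀ n, 1 ≤ ‖b n‖ := fun n => by
    have := Submodule.Quotient.norm_mk_le U (b n)
    rw [hb n, hy n] at this; exact this
  have ha0 : ∀ n, ‖a n‖ ≠ 0 := fun n => by have := ha1 n; positivity
  have hb0 : ∀ n, ‖b n‖ ≠ 0 := fun n => by have := hb1 n; positivity
  -- ‖a n‖ → 1, ‖b n‖ → 1
  have haux : Tendsto (fun n : ℕ => 1 + 1/((n:ℝ)+1)) atTop (𝓝 1) := by
    have : Tendsto (fun n : ℕ => 1/((n:ℝ)+1)) atTop (𝓝 0) := tendsto_one_div_add_atTop_nhds_zero_nat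
    simpa using (tendsto_const_nhds (x := (1:ℝ))).add this
  have hta : Tendsto (fun n => ‖a n‖) atTop (𝓝 1) := by
    refine tendsto_of_tendsto_of_tendsto_of_le_of_le tendsto_const_nhds haux ha1 (fun n => ?_)
    have := hna n; rw [hx n] at this; linarith
  have htb : Tendsto (fun n => ‖b n‖) atTop (𝓝 1) := by
    refine tendsto_of_tendsto_of_tendsto_of_le_of_le tendsto_const_nhds haux hb1 (fun n => ?_)
    have := hnb n; rw [hy n] at this; linarith
  have htainv : Tendsto (fun n => (‖a n‖)⁻¹) atTop (𝓝 1) := by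
    simpa using hta.inv₀ one_ne_zero
  have htbinv : Tendsto (fun n => (‖b n‖)⁻¹) atTop (𝓝 1) := by
    simpa using htb.inv₀ one_ne_zero
  -- normalized lifts
  set xh : ℕ → X := fun n => (‖a n‖)⁻¹ • a n with hxh
  set yh : ℕ → X := fun n => (‖b n‖)⁻¹ • b n with hyh
  have hxh1 : ∀ n, ‖xh n‖ = 1 := fun n => by
    rw [hxh]; simp [norm_smul, abs_of_nonneg (inv_nonneg.2 (norm_nonneg (a n))),
      inv_mul_cancel₀ (ha0 n)]
  have hyh1 : ∀ n, ‖yh n‖ = 1 := fun n => by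
    rw [hyh]; simp [norm_smul, abs_of_nonneg (inv_nonneg.2 (norm_nonneg (b n))),
      inv_mul_cancel₀ (hb0 n)]
  -- composed functionals
  set g : ℕ → StrongDual ℝ X := fun n => (f n).comp (quotCLM U) with hg
  have hg1 : ∀ n, ‖g n‖ = 1 := fun n => by rw [hg]; rw [norm_comp_quotCLM U (f n), hf n]
  -- g n (xh n) → 1
  have hgx : ∀ n, g n (xh n) = (‖a n‖)⁻¹ * f n (x n) := fun n => by
    simp [hg, hxh, ha n]
  have hgy : ∀ n, g n (yh n) = (‖b n‖)⁻¹ * f n (y n) := fun n => by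
    simp [hg, hyh, hb n]
  have htgx : Tendsto (fun n => g n (xh n)) atTop (𝓝 1) := by
    simp only [hgx]
    simpa using htainv.mul hfx
  -- norm condition
  have hnorm : Tendsto (fun n => ‖xh n + yh n‖) atTop (𝓝 2) := by
    have hlow : ∀ n, (‖a n‖)⁻¹ * ‖x n + y n‖ - |(‖b n‖)⁻¹ - (‖a n‖)⁻¹| ≤ ‖xh n + yh n‖ := by
      intro n
      have hq : ‖(Submodule.Quotient.mk (xh n + yh n) : X ⧸ U)‖ ≤ ‖xh n + yh n‖ :=
        Submodule.Quotient.norm_mk_le U _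
      have hmk : (Submodule.Quotient.mk (xh n + yh n) : X ⧸ U)
          = (‖a n‖)⁻¹ • x n + (‖b n‖)⁻¹ • y n := by
        simp only [hxh, hyh]
        rw [Submodule.Quotient.mk_add]
        congr 1
        · rw [Submodule.Quotient.mk_smul, ha n]
        · rw [Submodule.Quotient.mk_smul, hb n]
      have key : (‖a n‖)⁻¹ * ‖x n + y n‖ - |(‖b n‖)⁻¹ - (‖a n‖)⁻¹|
          ≤ ‖(‖a n‖)⁻¹ • x n + (‖b n‖)⁻¹ • y n‖ := by
        have hdecomp : (‖a n‖)⁻¹ • x n + (‖b n‖)⁻¹ • y n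
            = (‖a n‖)⁻¹ • (x n + y n) + ((‖b n‖)⁻¹ - (‖a n‖)⁻¹) • y n := by
          module
        rw [hdecomp]
        have h1 : ‖(‖a n‖)⁻¹ • (x n + y n)‖ = (‖a n‖)⁻¹ * ‖x n + y n‖ := by
          rw [norm_smul, Real.norm_eq_abs, abs_of_nonneg (inv_nonneg.2 (norm_nonneg _))]
        have h2 : ‖((‖b n‖)⁻¹ - (‖a n‖)⁻¹) • y n‖ = |(‖b n‖)⁻¹ - (‖a n‖)⁻¹| := by
          rw [norm_smul, Real.norm_eq_abs, hy n, mul_one]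
        calc (‖a n‖)⁻¹ * ‖x n + y n‖ - |(‖b n‖)⁻¹ - (‖a n‖)⁻¹|
            = ‖(‖a n‖)⁻¹ • (x n + y n)‖ - ‖((‖b n‖)⁻¹ - (‖a n‖)⁻¹) • y n‖ := by rw [h1, h2]
          _ ≤ ‖(‖a n‖)⁻¹ • (x n + y n) + ((‖b n‖)⁻¹ - (‖a n‖)⁻¹) • y n‖ := by
              have := norm_le_add_norm_add ((‖a n‖)⁻¹ • (x n + y n))
                (((‖b n‖)⁻¹ - (‖a n‖)⁻¹) • y n)
              linarith
      calc (‖a n‖)⁻¹ * ‖x n + y n‖ - |(‖b n‖)⁻¹ - (‖a n‖)⁻¹|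
          ≤ ‖(‖a n‖)⁻¹ • x n + (‖b n‖)⁻¹ • y n‖ := key
        _ = ‖(Submodule.Quotient.mk (xh n + yh n) : X ⧸ U)‖ := by rw [hmk]
        _ ≤ ‖xh n + yh n‖ := hq
    have hhigh : ∀ n, ‖xh n + yh n‖ ≤ 2 := fun n => by
      calc ‖xh n + yh n‖ ≤ ‖xh n‖ + ‖yh n‖ := norm_add_le _ _
        _ = 2 := by rw [hxh1 n, hyh1 n]; norm_num
    have htlow : Tendsto (fun n => (‖a n‖)⁻¹ * ‖x n + y n‖ - |(‖b n‖)⁻¹ - (‖a n‖)⁻¹|)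
        atTop (𝓝 2) := by
      have h1 : Tendsto (fun n => (‖a n‖)⁻¹ * ‖x n + y n‖) atTop (𝓝 2) := by
        simpa using htainv.mul hxy
      have h2 : Tendsto (fun n => |(‖b n‖)⁻¹ - (‖a n‖)⁻¹|) atTop (𝓝 0) := by
        have := (htbinv.sub htainv).abs
        simpa using this
      simpa using h1.sub h2
    exact tendsto_of_tendsto_of_tendsto_of_le_of_le htlow tendsto_const_nhds hlow hhigh
  -- apply uacs of X
  have hgy1 : Tendsto (fun n => g n (yh n)) atTop (𝓝 1) :=
    h xh yh g hxh1 hyh1 hg1 hnorm htgx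
  -- conclude
  have : Tendsto (fun n => ‖b n‖ * g n (yh n)) atTop (𝓝 1) := by
    simpa using htb.mul hgy1
  refine this.congr (fun n => ?_)
  rw [hgy n, mul_inv_cancel_left₀ (hb0 n)]
end

section
/- Let (xₙ) and (yₙ) be sequences in a normed space X such that ‖xₙ+yₙ‖ − ‖xₙ‖ − ‖yₙ‖ → 0. Then for any two bounded sequences (αₙ), (βₙ) of non-negative real numbers, ‖αₙxₙ + βₙyₙ‖ − αₙ‖xₙ‖ − βₙ‖yₙ‖ → 0. -/
open Filter Topology

theorem aux_lemma (X : Type*) [NormedAddCommGroup X] [NormedSpace ℝ X]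
    (x y : ℕ → X)
    (h : Tendsto (fun n => ‖x n + y n‖ - ‖x n‖ - ‖y n‖) atTop (𝓝 0))
    (α β : ℕ → ℝ) (hα0 : ∀ n, 0 ≤ α n) (hβ0 : ∀ n, 0 ≤ β n)
    (hαb : ∃ C : ℝ, ∀ n, α n ≤ C) (hβb : ∃ C : ℝ, ∀ n, β n ≤ C) :
    Tendsto (fun n => ‖α n • x n + β n • y n‖ - α n * ‖x n‖ - β n * ‖y n‖) atTop (𝓝 0) := by
  obtain ⟨C₁, hC₁⟩ := hαb
  obtain ⟨C₂, hC₂⟩ := hβb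
  set C := max C₁ C₂ with hC
  have hCα : ∀ n, α n ≤ C := fun n => (hC₁ n).trans (le_max_left _ _)
  have hCβ : ∀ n, β n ≤ C := fun n => (hC₂ n).trans (le_max_right _ _)
  have hlow : Tendsto (fun n => C * (‖x n + y n‖ - ‖x n‖ - ‖y n‖)) atTop (𝓝 0) := by
    simpa using h.const_mul C
  refine tendsto_of_tendsto_of_tendsto_of_le_of_le hlow tendsto_const_nhds ?_ ?_
  · intro n
    dsimp only
    have hε : ‖x n + y n‖ - ‖x n‖ - ‖y n‖ ≤ 0 := by
      have := norm_add_le (x n) (y n); linarith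
    rcases le_total (α n) (β n) with hle | hle
    · have key : β n * ‖x n + y n‖ ≤ ‖α n • x n + β n • y n‖ + (β n - α n) * ‖x n‖ := by
        calc β n * ‖x n + y n‖ = ‖β n • (x n + y n)‖ := by
              rw [norm_smul, Real.norm_of_nonneg (hβ0 n)]
          _ = ‖(α n • x n + β n • y n) + (β n - α n) • x n‖ := by
              congr 1; module
          _ ≤ ‖α n • x n + β n • y n‖ + ‖(β n - α n) • x n‖ := norm_add_le _ _
          _ = _ := by rw [norm_smul, Real.norm_of_nonneg (by linarith)]
      have h1 : C * (‖x n + y n‖ - ‖x n‖ - ‖y n‖) ≤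
          β n * (‖x n + y n‖ - ‖x n‖ - ‖y n‖) :=
        mul_le_mul_of_nonpos_right (hCβ n) hε
      nlinarith [key, h1]
    · have key : α n * ‖x n + y n‖ ≤ ‖α n • x n + β n • y n‖ + (α n - β n) * ‖y n‖ := by
        calc α n * ‖x n + y n‖ = ‖α n • (x n + y n)‖ := by
              rw [norm_smul, Real.norm_of_nonneg (hα0 n)]
          _ = ‖(α n • x n + β n • y n) + (α n - β n) • y n‖ := by
              congr 1; module
          _ ≤ ‖α n • x n + β n • y n‖ + ‖(α n - β n) • y n‖ := norm_add_le _ _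
          _ = _ := by rw [norm_smul, Real.norm_of_nonneg (by linarith)]
      have h1 : C * (‖x n + y n‖ - ‖x n‖ - ‖y n‖) ≤
          α n * (‖x n + y n‖ - ‖x n‖ - ‖y n‖) :=
        mul_le_mul_of_nonpos_right (hCα n) hε
      nlinarith [key, h1]
  · intro n
    dsimp only
    have h2 : ‖α n • x n + β n • y n‖ ≤ ‖α n • x n‖ + ‖β n • y n‖ := norm_add_le _ _
    rw [norm_smul, norm_smul, Real.norm_of_nonneg (hα0 n), Real.norm_of_nonneg (hβ0 n)] at h2
    linarith
end
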